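/- arXiv:2604.26354 — 3 statements merged into one kernel-verified Lean document; each statement's English description precedes it below -/
import Mathlib

section
/- For every integer g ≥ 1, let Q_g ∈ ℚ[y] be the unique polynomial with (1 − 108w)^{5g−1} · W_g = w · Q_g(w). Then Q_g(1/108) = 162^g · C_g. (For g = 1 this reads Q₁(1/108) = 162·(5 − 324/108) = 324 = 162·C₁ with C₁ = 2.) -/
/-!
Put `s = 1 - 6 v`. Then `x = w s`, `s² = 1 - 72 w`, `(1 - 108 w) w' = s` and
`(1 - 108 w) s' = -36`, so the ring `ℚ[w, s, (1 - 108 w)⁻¹]` is closed under `d/dx`. An element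
`(P(w) + Q(w) s) / (1 - 108 w)^n` has the leading coefficient `P(1/108) + Q(1/108) √(1/3)` at the
pole `w = 1/108`. Leading coefficients multiply, and `d/dx` raises the order by two and multiplies
the leading coefficient by `108 n √(1/3)`.

The Toda equations are linear in `V_g, W_g` with determinant `s² - 36 w = 1 - 108 w`. Solving them,
induction on `g` shows that `W_g` and `V_g` have poles of order `5g - 1` with leading coefficients
`162^g C_g / 108` and `162^g C_g √(1/3) / 6`. At top order only the products `V_a V_b`, `W_a V_b`
and the second-derivative terms contribute, and they reproduce the Painlevé I recursion rescaled
by `162^g`. Finally `w` is transcendental and `s ∉ ℚ(w)`, so the numerator `w Q_g(w)` of `W_g` is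
`P(w)` and `Q_g(1/108) = 108 P(1/108)`.
-/

open PowerSeries

/-- The formal derivative `d/dx` on `ℚ⟦x⟧`. -/
noncomputable def D : PowerSeries ℚ → PowerSeries ℚ := PowerSeries.derivativeFun

open scoped Polynomial QuadraticAlgebra

/- Leading coefficients live in `ℚ(√(1/3))`: `ω` is the value of `s = √(1 - 72 w)` at the pole
`w = 1/108`. -/
local notation "𝕂" => QuadraticAlgebra ℚ 3⁻¹ 0

section PoleExpansion

variable {A : Type*} [CommRing A] [Algebra ℚ A] {w s e e₁ e₂ : A} {n n₁ n₂ : ℕ} {ℓ ℓ₁ ℓ₂ : 𝕂}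

lemma Derivation.map_ofNat_mul (d : Derivation ℚ A A) (k : ℕ) [k.AtLeastTwo] (a : A) :
    d (OfNat.ofNat k * a) = OfNat.ofNat k * d a := by
  rw [← Nat.cast_ofNat, ← nsmul_eq_mul, map_nsmul, nsmul_eq_mul]

lemma Derivation.mul_map_pow (d : Derivation ℚ A A) (a : A) (n : ℕ) :
    a * d (a ^ n) = n * a ^ n * d a := by
  cases n with
  | zero => simp
  | succ k =>
    rw [Derivation.leibniz_pow, pow_succ, nsmul_eq_mul, smul_eq_mul]
    push_cast
    ring

structure PoleFrame (d : Derivation ℚ A A) (w s : A) : Prop where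
  sq_eq : s ^ 2 = 1 - 72 * w
  mul_map_w : (1 - 108 * w) * d w = s
  mul_map_s : (1 - 108 * w) * d s = -36

/- `e` has a pole of order at most `n` at `w = 1/108`, with coefficient `ℓ` of `(1 - 108 w)⁻ⁿ`. -/
def HasPoleExpansion (w s e : A) (n : ℕ) (ℓ : 𝕂) : Prop :=
  ∃ P Q : ℚ[X], (1 - 108 * w) ^ n * e = Polynomial.aeval w P + Polynomial.aeval w Q * s ∧
    ℓ = ⟨P.eval 108⁻¹, Q.eval 108⁻¹⟩

namespace HasPoleExpansion

lemma congr {e' : A} {n' : ℕ} {ℓ' : 𝕂} (h : HasPoleExpansion w s e n ℓ) (he : e = e')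
    (hn : n = n') (hℓ : ℓ = ℓ') : HasPoleExpansion w s e' n' ℓ' :=
  he ▸ hn ▸ hℓ ▸ h

lemma zero (n : ℕ) : HasPoleExpansion w s 0 n 0 :=
  ⟨0, 0, by simp, by ext <;> simp⟩

lemma const (c : ℚ) : HasPoleExpansion w s (algebraMap ℚ A c) 0 ⟨c, 0⟩ :=
  ⟨Polynomial.C c, 0, by simp, by simp⟩

lemma var : HasPoleExpansion w s w 0 ⟨108⁻¹, 0⟩ :=
  ⟨Polynomial.X, 0, by simp, by simp⟩

lemma sqrt : HasPoleExpansion w s s 0 ω :=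
  ⟨0, 1, by simp, by ext <;> simp⟩

lemma add (h₁ : HasPoleExpansion w s e₁ n ℓ₁) (h₂ : HasPoleExpansion w s e₂ n ℓ₂) :
    HasPoleExpansion w s (e₁ + e₂) n (ℓ₁ + ℓ₂) := by
  obtain ⟨P₁, Q₁, he₁, rfl⟩ := h₁
  obtain ⟨P₂, Q₂, he₂, rfl⟩ := h₂
  exact ⟨P₁ + P₂, Q₁ + Q₂, by simp only [map_add]; linear_combination he₁ + he₂,
    by ext <;> simp⟩

lemma sum {ι : Type*} {T : Finset ι} {f : ι → A} {a b : ι → ℚ}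
    (h : ∀ i ∈ T, HasPoleExpansion w s (f i) n ⟨a i, b i⟩) :
    HasPoleExpansion w s (∑ i ∈ T, f i) n ⟨∑ i ∈ T, a i, ∑ i ∈ T, b i⟩ := by
  classical
  induction T using Finset.induction_on with
  | empty => exact (zero n).congr (by simp) rfl (by ext <;> simp)
  | insert i T hi ih =>
    refine ((h i (Finset.mem_insert_self i T)).add
      (ih fun j hj => h j (Finset.mem_insert_of_mem hj))).congr (Finset.sum_insert hi).symm rfl ?_
    ext <;> simp [Finset.sum_insert hi]

lemma sum_zero {ι : Type*} {T : Finset ι} {f : ι → A}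
    (h : ∀ i ∈ T, HasPoleExpansion w s (f i) n 0) : HasPoleExpansion w s (∑ i ∈ T, f i) n 0 :=
  (sum (a := 0) (b := 0) fun i hi => (h i hi).congr rfl rfl (by ext <;> simp)).congr rfl rfl
    (by ext <;> simp)

lemma mul (hs : s ^ 2 = 1 - 72 * w) (h₁ : HasPoleExpansion w s e₁ n₁ ℓ₁)
    (h₂ : HasPoleExpansion w s e₂ n₂ ℓ₂) :
    HasPoleExpansion w s (e₁ * e₂) (n₁ + n₂) (ℓ₁ * ℓ₂) := by
  obtain ⟨P₁, Q₁, he₁, rfl⟩ := h₁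
  obtain ⟨P₂, Q₂, he₂, rfl⟩ := h₂
  refine ⟨P₁ * P₂ + (1 - 72 * Polynomial.X) * (Q₁ * Q₂), P₁ * Q₂ + P₂ * Q₁, ?_, ?_⟩
  · simp only [map_add, map_mul, map_sub, map_one, map_ofNat, Polynomial.aeval_X]
    linear_combination (1 - 108 * w) ^ n₂ * e₂ * he₁ +
      (Polynomial.aeval w P₁ + Polynomial.aeval w Q₁ * s) * he₂ +
      Polynomial.aeval w Q₁ * Polynomial.aeval w Q₂ * hs
  · ext <;> simp <;> ring

lemma const_mul (c : ℚ) (h : HasPoleExpansion w s e n ℓ) :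
    HasPoleExpansion w s (algebraMap ℚ A c * e) n (⟨c, 0⟩ * ℓ) := by
  obtain ⟨P, Q, he, rfl⟩ := h
  refine ⟨Polynomial.C c * P, Polynomial.C c * Q, ?_, by ext <;> simp⟩
  simp only [map_mul, Polynomial.aeval_C]
  linear_combination algebraMap ℚ A c * he

lemma of_lt {m : ℕ} (h : HasPoleExpansion w s e n ℓ) (hnm : n < m) :
    HasPoleExpansion w s e m 0 := by
  obtain ⟨P, Q, he, rfl⟩ := h
  obtain ⟨k, rfl⟩ := Nat.exists_eq_add_of_lt hnm
  refine ⟨(1 - 108 * Polynomial.X) ^ (k + 1) * P, (1 - 108 * Polynomial.X) ^ (k + 1) * Q, ?_, ?_⟩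
  · simp only [map_mul, map_pow, map_sub, map_one, map_ofNat, Polynomial.aeval_X]
    linear_combination (1 - 108 * w) ^ (k + 1) * he
  · ext <;> norm_num

lemma of_mul_left (h : HasPoleExpansion w s ((1 - 108 * w) * e) n ℓ) :
    HasPoleExpansion w s e (n + 1) ℓ := by
  obtain ⟨P, Q, he, rfl⟩ := h
  exact ⟨P, Q, by rw [pow_succ]; linear_combination he, rfl⟩

lemma derivation {d : Derivation ℚ A A} (hF : PoleFrame d w s) (h : HasPoleExpansion w s e n ℓ) :
    HasPoleExpansion w s (d e) (n + 2) (108 * (n : 𝕂) * ω * ℓ) := by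
  obtain ⟨hs, hdw, hds⟩ := hF
  obtain ⟨P, Q, he, rfl⟩ := h
  have hdε : (1 - 108 * w) * d ((1 - 108 * w) ^ n) = -108 * n * (1 - 108 * w) ^ n * d w := by
    rw [Derivation.mul_map_pow, map_sub, Derivation.map_one_eq_zero, Derivation.map_ofNat_mul]
    ring
  have hde := congrArg d he
  simp only [Derivation.leibniz, Derivation.map_aeval, smul_eq_mul, map_add] at hde
  set P' := Polynomial.derivative P
  set Q' := Polynomial.derivative Q
  refine ⟨(1 - 108 * Polynomial.X) * ((1 - 72 * Polynomial.X) * Q' - 36 * Q)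
      + 108 * (n : ℚ[X]) * (1 - 72 * Polynomial.X) * Q,
    (1 - 108 * Polynomial.X) * P' + 108 * (n : ℚ[X]) * P, ?_, ?_⟩
  · simp only [map_add, map_mul, map_sub, map_one, map_ofNat, map_natCast, Polynomial.aeval_X]
    linear_combination (1 - 108 * w) ^ 2 * hde - e * (1 - 108 * w) * hdε
      + 108 * (n : A) * s * he + 108 * (n : A) * e * (1 - 108 * w) ^ n * hdw
      + (1 - 108 * w) * Polynomial.aeval w P' * hdw + (1 - 108 * w) * Polynomial.aeval w Q * hds
      + (1 - 108 * w) * s * Polynomial.aeval w Q' * hdw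
      + ((1 - 108 * w) * Polynomial.aeval w Q' + 108 * (n : A) * Polynomial.aeval w Q) * hs
  · ext <;> simp [-mul_eq_mul_left_iff, -mul_eq_mul_right_iff]; ring

lemma iterate_derivation {d : Derivation ℚ A A} (hF : PoleFrame d w s)
    (h : HasPoleExpansion w s e n ℓ) (j : ℕ) :
    ∃ ℓ', HasPoleExpansion w s (d^[j] e) (n + 2 * j) ℓ' := by
  induction j with
  | zero => exact ⟨ℓ, h⟩
  | succ j ih =>
    obtain ⟨ℓ', h'⟩ := ih
    rw [Function.iterate_succ_apply', show n + 2 * (j + 1) = n + 2 * j + 2 by ring]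
    exact ⟨_, h'.derivation hF⟩

end HasPoleExpansion

end PoleExpansion

lemma PowerSeries.constantCoeff_aeval {R : Type*} [CommRing R] (w : R⟦X⟧) (P : R[X]) :
    constantCoeff (Polynomial.aeval w P) = P.eval (constantCoeff w) := by
  rw [Polynomial.aeval_def, Polynomial.hom_eval₂]
  congr 1

lemma PowerSeries.aeval_ne_zero_of_constantCoeff_eq_zero {R : Type*} [CommRing R] [IsDomain R]
    {w : R⟦X⟧} (hw : constantCoeff w = 0) (hw0 : w ≠ 0) {P : R[X]} (hP : P ≠ 0) :
    Polynomial.aeval w P ≠ 0 := by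
  obtain ⟨Q, hPQ, hQ⟩ := P.exists_eq_pow_rootMultiplicity_mul_and_not_dvd hP 0
  rw [map_zero, sub_zero] at hPQ hQ
  rw [Polynomial.X_dvd_iff, Polynomial.coeff_zero_eq_eval_zero] at hQ
  have hQw : Polynomial.aeval w Q ≠ 0 := fun h0 => hQ <| by
    simpa [constantCoeff_aeval, hw] using congrArg constantCoeff h0
  rw [hPQ, map_mul, map_pow, Polynomial.aeval_X]
  exact mul_ne_zero (pow_ne_zero _ hw0) hQw

lemma PowerSeries.eq_zero_of_aeval_add_aeval_mul_sqrt_eq_zero {w s : ℚ⟦X⟧}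
    (hw : constantCoeff w = 0) (hw0 : w ≠ 0) (hs : s ^ 2 = 1 - 72 * w) {P Q : ℚ[X]}
    (h : Polynomial.aeval w P + Polynomial.aeval w Q * s = 0) : P = 0 ∧ Q = 0 := by
  have hsq : P ^ 2 = Q ^ 2 * (1 - 72 * Polynomial.X) := by
    by_contra hne
    refine aeval_ne_zero_of_constantCoeff_eq_zero hw hw0 (sub_ne_zero.mpr hne) ?_
    simp only [map_sub, map_mul, map_pow, map_one, map_ofNat, Polynomial.aeval_X]
    linear_combination (Polynomial.aeval w P - Polynomial.aeval w Q * s) * h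
      + Polynomial.aeval w Q ^ 2 * hs
  have hdeg : (1 - 72 * Polynomial.X : ℚ[X]).natDegree = 1 := by compute_degree!
  have hQ : Q = 0 := by
    by_contra hQ
    have hparity := congrArg Polynomial.natDegree hsq
    rw [Polynomial.natDegree_pow, Polynomial.natDegree_mul (pow_ne_zero 2 hQ)
      (Polynomial.ne_zero_of_natDegree_gt (n := 0) (by omega)), Polynomial.natDegree_pow,
      hdeg] at hparity
    omega
  subst hQ
  exact ⟨pow_eq_zero_iff two_ne_zero |>.mp (by simpa using hsq), rfl⟩

namespace HasPoleExpansion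

variable {w s e : ℚ⟦X⟧} {n : ℕ} {ℓ : 𝕂}

lemma C_mul (c : ℚ) (h : HasPoleExpansion w s e n ℓ) :
    HasPoleExpansion w s (C c * e) n (⟨c, 0⟩ * ℓ) := by
  rw [PowerSeries.C_eq_algebraMap]
  exact h.const_mul c

lemma eval_eq_of_eq_mul_aeval {a : ℚ} {Q : ℚ[X]} (hw : constantCoeff w = 0) (hw0 : w ≠ 0)
    (hs : s ^ 2 = 1 - 72 * w) (h : HasPoleExpansion w s e n ⟨a, 0⟩)
    (hQ : (1 - 108 * w) ^ n * e = w * Polynomial.aeval w Q) : Q.eval 108⁻¹ = 108 * a := by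
  obtain ⟨P, R, he, hℓ⟩ := h
  obtain ⟨hP, -⟩ := eq_zero_of_aeval_add_aeval_mul_sqrt_eq_zero hw hw0 hs
    (P := P - Polynomial.X * Q) (Q := R)
    (by simp only [map_sub, map_mul, Polynomial.aeval_X]; linear_combination hQ - he)
  have ha : a = P.eval 108⁻¹ := congrArg QuadraticAlgebra.re hℓ
  rw [sub_eq_zero.mp hP, Polynomial.eval_mul, Polynomial.eval_X] at ha
  linear_combination -108 * ha

end HasPoleExpansion

section GenusZero

variable {v w : ℚ⟦X⟧}

lemma X_eq_mul_one_sub (hv0 : constantCoeff v = 0) (hw : w = X * (1 - 6 * v)⁻¹) :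
    X = w * (1 - 6 * v) := by
  rw [hw, mul_assoc, PowerSeries.inv_mul_cancel _ (by simp [hv0]), mul_one]

lemma constantCoeff_eq_zero_of_X_eq (hX : X = w * (1 - 6 * v)) (hv0 : constantCoeff v = 0) :
    constantCoeff w = 0 := by
  simpa [hv0] using (congrArg constantCoeff hX).symm

lemma ne_zero_of_X_eq (hX : X = w * (1 - 6 * v)) : w ≠ 0 := by
  rintro rfl
  simp at hX

lemma one_sub_six_mul_sq (hv0 : constantCoeff v = 0) (hv : 6 * X = (1 - 9 * v + 18 * v ^ 2) * v)
    (hX : X = w * (1 - 6 * v)) : (1 - 6 * v) ^ 2 = 1 - 72 * w := by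
  have hs : (1 - 6 * v) ≠ 0 := fun h => by simpa [hv0] using congrArg constantCoeff h
  refine mul_left_cancel₀ hs ?_
  linear_combination 12 * hv - 72 * hX

lemma poleFrame_of_cubic (hv0 : constantCoeff v = 0) (hv : 6 * X = (1 - 9 * v + 18 * v ^ 2) * v)
    (hX : X = w * (1 - 6 * v)) :
    PoleFrame (derivative ℚ) w (1 - 6 * v) ∧ (1 - 108 * w) * D v = 6 := by
  set d := derivative ℚ
  have hs := one_sub_six_mul_sq hv0 hv hX
  have hs0 : (1 - 6 * v) ≠ 0 := fun h => by simpa [hv0] using congrArg constantCoeff h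
  have hdX := congrArg d hX
  rw [derivative_X, Derivation.leibniz, map_sub, Derivation.map_one_eq_zero,
    Derivation.map_ofNat_mul, smul_eq_mul, smul_eq_mul] at hdX
  have hdv : (1 - 6 * v) * d v = 6 * d w := by
    have hds := congrArg d hs
    rw [Derivation.leibniz_pow, map_sub, map_sub, Derivation.map_one_eq_zero,
      Derivation.map_ofNat_mul, Derivation.map_ofNat_mul, nsmul_eq_mul, smul_eq_mul,
      Nat.cast_ofNat, pow_one] at hds
    have : CharZero ℚ⟦X⟧ := RingHom.charZero constantCoeff
    refine mul_left_cancel₀ (by norm_num : (-12 : ℚ⟦X⟧) ≠ 0) ?_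
    linear_combination hds
  have hdw : (1 - 108 * w) * d w = 1 - 6 * v := by
    linear_combination (-(1 - 6 * v)) * hdX + 6 * w * hdv - d w * hs
  have hdv' : (1 - 108 * w) * d v = 6 := by
    refine mul_left_cancel₀ hs0 ?_
    linear_combination (1 - 108 * w) * hdv + 6 * hdw
  refine ⟨⟨hs, hdw, ?_⟩, hdv'⟩
  rw [map_sub, Derivation.map_one_eq_zero, Derivation.map_ofNat_mul]
  linear_combination (-6) * hdv'

end GenusZero

lemma Finset.Nat.sum_antidiagonal_succ_eq_add_add_sum_range {M : Type*} [AddCommMonoid M]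
    (f : ℕ × ℕ → M) (m : ℕ) :
    ∑ p ∈ Finset.HasAntidiagonal.antidiagonal (m + 1), f p
      = f (0, m + 1) + f (m + 1, 0) + ∑ i ∈ Finset.range m, f (i + 1, m - i) := by
  rw [sum_antidiagonal_eq_sum_range_succ_mk, Finset.sum_range_succ', Finset.sum_range_succ]
  simp only [Nat.add_sub_add_right, Nat.sub_self, Nat.sub_zero]
  abel

open Finset.HasAntidiagonal

section Toda

def todaCoeff (k : ℕ) : ℚ := 1 / ((4 : ℚ) ^ k * (2 * k).factorial)

noncomputable def todaV (V W : ℕ → ℚ⟦X⟧) (g : ℕ) : ℚ⟦X⟧ :=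
  3 * ∑ p ∈ antidiagonal g, V p.1 * V p.2
    + 6 * ∑ p ∈ antidiagonal g, C (todaCoeff p.1) * D^[2 * p.1] (W p.2)

noncomputable def todaW (V W : ℕ → ℚ⟦X⟧) (g : ℕ) : ℚ⟦X⟧ :=
  6 * ∑ p ∈ antidiagonal g, ∑ r ∈ antidiagonal p.2,
    C (todaCoeff p.1) * (W r.1 * D^[2 * p.1] (V r.2))

/- The right-hand sides of the Toda equations in genus `m + 1`, without the terms that contain
`V (m + 1)` or `W (m + 1)`. -/
noncomputable def todaRestV (V W : ℕ → ℚ⟦X⟧) (m : ℕ) : ℚ⟦X⟧ :=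
  3 * ∑ i ∈ Finset.range m, V (i + 1) * V (m - i)
    + 6 * ∑ k ∈ Finset.range (m + 1), C (todaCoeff (k + 1)) * D^[2 * (k + 1)] (W (m - k))

noncomputable def todaRestW (V W : ℕ → ℚ⟦X⟧) (m : ℕ) : ℚ⟦X⟧ :=
  6 * (∑ i ∈ Finset.range m, W (i + 1) * V (m - i)
    + ∑ k ∈ Finset.range (m + 1), ∑ r ∈ antidiagonal (m - k),
        C (todaCoeff (k + 1)) * (W r.1 * D^[2 * (k + 1)] (V r.2)))

variable {w s : ℚ⟦X⟧} {V W : ℕ → ℚ⟦X⟧} {m : ℕ}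

lemma todaCoeff_zero : todaCoeff 0 = 1 := by simp [todaCoeff]

lemma todaCoeff_one : todaCoeff 1 = 1 / 8 := by norm_num [todaCoeff]

lemma sub_eq_todaRestV (hV0 : 1 - 6 * V 0 = s) (h : V (m + 1) = todaV V W (m + 1)) :
    s * V (m + 1) - 6 * W (m + 1) = todaRestV V W m := by
  rw [todaV, Finset.Nat.sum_antidiagonal_succ_eq_add_add_sum_range,
    Finset.Nat.sum_antidiagonal_eq_sum_range_succ_mk, Finset.sum_range_succ'] at h
  simp only [todaCoeff_zero, map_one, one_mul, Nat.sub_zero, Nat.add_sub_add_right, mul_zero,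
    Function.iterate_zero, id_eq] at h
  rw [todaRestV, ← hV0]
  linear_combination h

lemma sub_eq_todaRestW (hV0 : 1 - 6 * V 0 = s) (hW0 : W 0 = w)
    (h : W (m + 1) = todaW V W (m + 1)) :
    s * W (m + 1) - 6 * w * V (m + 1) = todaRestW V W m := by
  rw [todaW, Finset.Nat.sum_antidiagonal_eq_sum_range_succ_mk, Finset.sum_range_succ'] at h
  simp only [todaCoeff_zero, map_one, one_mul, Nat.sub_zero, Nat.add_sub_add_right, mul_zero,
    Function.iterate_zero, id_eq, Finset.Nat.sum_antidiagonal_succ_eq_add_add_sum_range] at h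
  rw [todaRestW, ← hV0, ← hW0]
  linear_combination h

end Toda

section Leads

/- The invariant of the induction, with `c g = 162^g C_g`. The derivative clauses also hold at
`g = 0`, where `W 0 = w` and `V 0 = v` have no pole. -/
structure HasGenusLeads (w s : ℚ⟦X⟧) (V W : ℕ → ℚ⟦X⟧) (c : ℕ → ℚ) (g : ℕ) : Prop where
  W_pole : 1 ≤ g → HasPoleExpansion w s (W g) (5 * g - 1) ⟨c g / 108, 0⟩
  V_pole : 1 ≤ g → HasPoleExpansion w s (V g) (5 * g - 1) ⟨0, c g / 6⟩
  D_W_pole : HasPoleExpansion w s (D (W g)) (5 * g + 1) ⟨0, (5 * g - 1) * c g⟩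
  D_V_pole : HasPoleExpansion w s (D (V g)) (5 * g + 1) ⟨6 * (5 * g - 1) * c g, 0⟩

variable {w s : ℚ⟦X⟧} {V W : ℕ → ℚ⟦X⟧} {c : ℕ → ℚ} {g m : ℕ}

namespace HasGenusLeads

lemma iterate_D_W (hF : PoleFrame (derivative ℚ) w s) (h : HasGenusLeads w s V W c g) (j : ℕ) :
    ∃ ℓ, HasPoleExpansion w s (D^[j + 1] (W g)) (5 * g + 1 + 2 * j) ℓ := by
  rw [Function.iterate_succ_apply]
  exact h.D_W_pole.iterate_derivation hF j

lemma iterate_D_V (hF : PoleFrame (derivative ℚ) w s) (h : HasGenusLeads w s V W c g) (j : ℕ) :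
    ∃ ℓ, HasPoleExpansion w s (D^[j + 1] (V g)) (5 * g + 1 + 2 * j) ℓ := by
  rw [Function.iterate_succ_apply]
  exact h.D_V_pole.iterate_derivation hF j

lemma D_D_W (hF : PoleFrame (derivative ℚ) w s) (h : HasGenusLeads w s V W c g) :
    HasPoleExpansion w s (D^[2] (W g)) (5 * g + 3)
      ⟨36 * ((5 * g - 1) * (5 * g + 1)) * c g, 0⟩ :=
  (h.D_W_pole.derivation hF).congr rfl rfl (by ext <;> simp; ring)

lemma D_D_V (hF : PoleFrame (derivative ℚ) w s) (h : HasGenusLeads w s V W c g) :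
    HasPoleExpansion w s (D^[2] (V g)) (5 * g + 3)
      ⟨0, 648 * ((5 * g - 1) * (5 * g + 1)) * c g⟩ :=
  (h.D_V_pole.derivation hF).congr rfl rfl (by ext <;> simp; ring)

end HasGenusLeads

lemma HasGenusLeads.exists_W (hW0 : W 0 = w) (h : HasGenusLeads w s V W c g) :
    ∃ ℓ, HasPoleExpansion w s (W g) (5 * g - 1) ℓ := by
  rcases Nat.eq_zero_or_pos g with rfl | hg
  · exact ⟨_, by rw [hW0]; exact HasPoleExpansion.var⟩
  · exact ⟨_, h.W_pole hg⟩

lemma hasPoleExpansion_todaRestV (hF : PoleFrame (derivative ℚ) w s)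
    (ih : ∀ h ≤ m, HasGenusLeads w s V W c h) :
    HasPoleExpansion w s (todaRestV V W m) (5 * m + 3)
      ⟨(∑ i ∈ Finset.range m, c (i + 1) * c (m - i)) / 36
        + 27 * ((5 * m - 1) * (5 * m + 1)) * c m, 0⟩ := by
  have hVV : HasPoleExpansion w s (∑ i ∈ Finset.range m, V (i + 1) * V (m - i)) (5 * m + 3)
      ⟨(∑ i ∈ Finset.range m, c (i + 1) * c (m - i)) / 108, 0⟩ := by
    refine (HasPoleExpansion.sum (a := fun i => c (i + 1) * c (m - i) / 108) (b := 0)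
      fun i hi => ?_).congr rfl rfl (by ext <;> simp [Finset.sum_div])
    have hi := Finset.mem_range.mp hi
    refine (((ih (i + 1) (by omega)).V_pole (by omega)).mul hF.sq_eq
      ((ih (m - i) (by omega)).V_pole (by omega))).congr rfl (by omega) ?_
    ext <;> simp; ring
  -- `D^{2k} W_h` has order `5h + 4k - 1`, so only `k = 1` reaches the top order `5m + 3`.
  have hlow : HasPoleExpansion w s (∑ k ∈ Finset.range m,
      C (todaCoeff (k + 1 + 1)) * D^[2 * (k + 1 + 1)] (W (m - (k + 1)))) (5 * m + 3) 0 := by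
    refine HasPoleExpansion.sum_zero fun k hk => ?_
    have hk := Finset.mem_range.mp hk
    obtain ⟨ℓ, h⟩ := (ih (m - (k + 1)) (by omega)).iterate_D_W hF (2 * k + 3)
    exact ((h.of_lt (by omega)).C_mul _).congr
      (by rw [show 2 * (k + 1 + 1) = 2 * k + 3 + 1 by ring]) rfl (by simp)
  have hDW := hlow.add (((ih m le_rfl).D_D_W hF).C_mul (todaCoeff (0 + 1)))
  refine ((hVV.C_mul 3).add (hDW.C_mul 6)).congr
    (by rw [todaRestV, Finset.sum_range_succ' _ m, map_ofNat C 3, map_ofNat C 6]; simp) rfl ?_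
  ext <;> simp [todaCoeff_one]; ring

lemma hasPoleExpansion_todaRestW (hF : PoleFrame (derivative ℚ) w s) (hW0 : W 0 = w)
    (ih : ∀ h ≤ m, HasGenusLeads w s V W c h) :
    HasPoleExpansion w s (todaRestW V W m) (5 * m + 3)
      ⟨0, (∑ i ∈ Finset.range m, c (i + 1) * c (m - i)) / 108
        + 9 / 2 * ((5 * m - 1) * (5 * m + 1)) * c m⟩ := by
  have hWV : HasPoleExpansion w s (∑ i ∈ Finset.range m, W (i + 1) * V (m - i)) (5 * m + 3)
      ⟨0, (∑ i ∈ Finset.range m, c (i + 1) * c (m - i)) / 648⟩ := by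
    refine (HasPoleExpansion.sum (a := 0) (b := fun i => c (i + 1) * c (m - i) / 648)
      fun i hi => ?_).congr rfl rfl (by ext <;> simp [Finset.sum_div])
    have hi := Finset.mem_range.mp hi
    refine (((ih (i + 1) (by omega)).W_pole (by omega)).mul hF.sq_eq
      ((ih (m - i) (by omega)).V_pole (by omega))).congr rfl (by omega) ?_
    ext <;> simp; ring
  have hlow₁ : HasPoleExpansion w s (∑ j ∈ Finset.range m,
      C (todaCoeff 1) * (W (j + 1) * D^[2] (V (m - (j + 1))))) (5 * m + 3) 0 := by
    refine HasPoleExpansion.sum_zero fun j hj => ?_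
    have hj := Finset.mem_range.mp hj
    exact ((((ih (j + 1) (by omega)).W_pole (by omega)).mul hF.sq_eq
      ((ih (m - (j + 1)) (by omega)).D_D_V hF)).of_lt (by omega)).C_mul _
      |>.congr rfl rfl (by simp)
  have hmain : HasPoleExpansion w s (C (todaCoeff 1) * (W 0 * D^[2] (V m))) (5 * m + 3)
      ⟨0, 9 / 2 * ((5 * m - 1) * (5 * m + 1)) * c m / 6⟩ := by
    rw [hW0]
    refine (HasPoleExpansion.var.mul hF.sq_eq ((ih m le_rfl).D_D_V hF)).C_mul _ |>.congr rfl
      (by ring) ?_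
    ext <;> simp [todaCoeff_one]; ring
  have hlow₂ : HasPoleExpansion w s (∑ k ∈ Finset.range m, ∑ r ∈ antidiagonal (m - (k + 1)),
      C (todaCoeff (k + 1 + 1)) * (W r.1 * D^[2 * (k + 1 + 1)] (V r.2))) (5 * m + 3) 0 := by
    refine HasPoleExpansion.sum_zero fun k hk => HasPoleExpansion.sum_zero fun r hr => ?_
    have hk := Finset.mem_range.mp hk
    have hr := mem_antidiagonal.mp hr
    obtain ⟨ℓ₁, h₁⟩ := (ih r.1 (by omega)).exists_W hW0
    obtain ⟨ℓ₂, h₂⟩ := (ih r.2 (by omega)).iterate_D_V hF (2 * k + 3)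
    exact ((h₁.mul hF.sq_eq h₂).of_lt (by omega)).C_mul _ |>.congr
      (by rw [show 2 * (k + 1 + 1) = 2 * k + 3 + 1 by ring]) rfl (by simp)
  refine ((hWV.add ((hlow₁.add hmain).add hlow₂)).C_mul 6).congr ?_ rfl ?_
  · rw [todaRestW, Finset.sum_range_succ' _ m, Finset.Nat.sum_antidiagonal_eq_sum_range_succ_mk,
      Finset.sum_range_succ', map_ofNat C 6]
    simp only [zero_add, Nat.sub_zero, mul_one]
    ring
  · ext <;> simp; ring

lemma hasGenusLeads_zero (hF : PoleFrame (derivative ℚ) w s) (hW0 : W 0 = w)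
    (hDV0 : (1 - 108 * w) * D (V 0) = 6) (hc0 : c 0 = -1) : HasGenusLeads w s V W c 0 where
  W_pole := by omega
  V_pole := by omega
  D_W_pole := hW0 ▸ (HasPoleExpansion.sqrt.congr hF.mul_map_w.symm rfl rfl).of_mul_left.congr
    rfl rfl (by ext <;> simp [hc0])
  D_V_pole := ((HasPoleExpansion.const 6).congr (by rw [map_ofNat, hDV0]) rfl rfl).of_mul_left.congr
    rfl rfl (by ext <;> simp [hc0])

lemma hasGenusLeads_of_pos (hF : PoleFrame (derivative ℚ) w s) (hg : 1 ≤ g)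
    (hW : HasPoleExpansion w s (W g) (5 * g - 1) ⟨c g / 108, 0⟩)
    (hV : HasPoleExpansion w s (V g) (5 * g - 1) ⟨0, c g / 6⟩) : HasGenusLeads w s V W c g := by
  have hcast : ((5 * g - 1 : ℕ) : 𝕂) = 5 * g - 1 := by
    rw [Nat.cast_sub (by omega)]
    push_cast
    ring
  refine ⟨fun _ => hW, fun _ => hV, (hW.derivation hF).congr rfl (by omega) ?_,
    (hV.derivation hF).congr rfl (by omega) ?_⟩
  · rw [hcast]; ext <;> simp; ring
  · rw [hcast]; ext <;> simp; ring

lemma HasGenusLeads.succ (hF : PoleFrame (derivative ℚ) w s) (hV0 : 1 - 6 * V 0 = s)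
    (hW0 : W 0 = w) (hV : V (m + 1) = todaV V W (m + 1)) (hW : W (m + 1) = todaW V W (m + 1))
    (hc : c (m + 1) = (∑ i ∈ Finset.range m, c (i + 1) * c (m - i)) / 2
      + 324 * ((5 * m - 1) * (5 * m + 1)) * c m)
    (ih : ∀ h ≤ m, HasGenusLeads w s V W c h) : HasGenusLeads w s V W c (m + 1) := by
  have hA := hasPoleExpansion_todaRestV hF ih
  have hB := hasPoleExpansion_todaRestW hF hW0 ih
  have eA := sub_eq_todaRestV hV0 hV
  have eB := sub_eq_todaRestW hV0 hW0 hW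
  -- the determinant `s² - 36 w = 1 - 108 w` of this linear system raises the pole order by one
  have hεV : s * todaRestV V W m + C 6 * todaRestW V W m = (1 - 108 * w) * V (m + 1) := by
    rw [map_ofNat C 6]
    linear_combination -s * eA - 6 * eB + V (m + 1) * hF.sq_eq
  have hεW : C 6 * (w * todaRestV V W m) + s * todaRestW V W m = (1 - 108 * w) * W (m + 1) := by
    rw [map_ofNat C 6]
    linear_combination -6 * w * eA - s * eB + W (m + 1) * hF.sq_eq
  refine hasGenusLeads_of_pos hF (by omega) ?_ ?_
  · refine ((HasPoleExpansion.var.mul hF.sq_eq hA).congr rfl (zero_add _) rfl |>.C_mul 6 |>.add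
      ((HasPoleExpansion.sqrt.mul hF.sq_eq hB).congr rfl (zero_add _) rfl)).congr hεW rfl rfl
      |>.of_mul_left.congr rfl (by omega) ?_
    ext <;> simp [hc]; ring
  · refine ((HasPoleExpansion.sqrt.mul hF.sq_eq hA).congr rfl (zero_add _) rfl |>.add
      (hB.C_mul 6)).congr hεV rfl rfl |>.of_mul_left.congr rfl (by omega) ?_
    ext <;> simp [hc]; ring

lemma hasGenusLeads_of_toda (hF : PoleFrame (derivative ℚ) w s) (hV0 : 1 - 6 * V 0 = s)
    (hW0 : W 0 = w) (hDV0 : (1 - 108 * w) * D (V 0) = 6)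
    (hV : ∀ g, 1 ≤ g → V g = todaV V W g) (hW : ∀ g, 1 ≤ g → W g = todaW V W g)
    (hc0 : c 0 = -1) (hc : ∀ m, c (m + 1) = (∑ i ∈ Finset.range m, c (i + 1) * c (m - i)) / 2
      + 324 * ((5 * m - 1) * (5 * m + 1)) * c m) (g : ℕ) : HasGenusLeads w s V W c g := by
  induction g using Nat.strong_induction_on with
  | _ g ih =>
    cases g with
    | zero => exact hasGenusLeads_zero hF hW0 hDV0 hc0
    | succ m =>
      exact HasGenusLeads.succ hF hV0 hW0 (hV _ (by omega)) (hW _ (by omega)) (hc m)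
        fun h hh => ih h (by omega)

end Leads

lemma rescaled_recurrence {Cg : ℕ → ℚ} (hC0 : Cg 0 = -1)
    (hCrec : ∀ g : ℕ, 1 ≤ g →
      ∑ p ∈ antidiagonal g, Cg p.1 * Cg p.2
        + 4 * (5 * (g : ℚ) - 6) * (5 * (g : ℚ) - 4) * Cg (g - 1) = 0) (m : ℕ) :
    162 ^ (m + 1) * Cg (m + 1) =
      (∑ i ∈ Finset.range m, 162 ^ (i + 1) * Cg (i + 1) * (162 ^ (m - i) * Cg (m - i))) / 2
        + 324 * ((5 * m - 1) * (5 * m + 1)) * (162 ^ m * Cg m) := by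
  have h := hCrec (m + 1) (by omega)
  rw [Finset.Nat.sum_antidiagonal_succ_eq_add_add_sum_range, hC0, Nat.add_sub_cancel] at h
  have hsum : ∑ i ∈ Finset.range m, 162 ^ (i + 1) * Cg (i + 1) * (162 ^ (m - i) * Cg (m - i))
      = 162 ^ (m + 1) * ∑ i ∈ Finset.range m, Cg (i + 1) * Cg (m - i) := by
    rw [Finset.mul_sum]
    refine Finset.sum_congr rfl fun i hi => ?_
    rw [show m + 1 = (i + 1) + (m - i) by have := Finset.mem_range.mp hi; omega, pow_add]
    ring
  rw [hsum]
  push_cast at h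
  linear_combination (-162 ^ (m + 1) / 2 : ℚ) * h

theorem stmt3 (v w : PowerSeries ℚ) (hv0 : constantCoeff v = 0)
    (hv : 6 * (X : ℚ⟦X⟧) = (1 - 9 * v + 18 * v ^ 2) * v)
    (hw : w = X * (1 - 6 * v)⁻¹)
    (V W : ℕ → PowerSeries ℚ) (hV0 : V 0 = v) (hW0 : W 0 = w)
    (hVg : ∀ g, 1 ≤ g →
      V g = 3 * ∑ p ∈ Finset.HasAntidiagonal.antidiagonal g, V p.1 * V p.2
        + 6 * ∑ p ∈ Finset.HasAntidiagonal.antidiagonal g,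
            C (1 / ((4 : ℚ) ^ p.1 * (2 * p.1).factorial)) * D^[2 * p.1] (W p.2))
    (hWg : ∀ g, 1 ≤ g →
      W g = 6 * ∑ p ∈ Finset.HasAntidiagonal.antidiagonal g, ∑ r ∈ Finset.HasAntidiagonal.antidiagonal p.2,
            C (1 / ((4 : ℚ) ^ p.1 * (2 * p.1).factorial)) * (W r.1 * D^[2 * p.1] (V r.2)))
    (Cg : ℕ → ℚ) (hC0 : Cg 0 = -1)
    (hCrec : ∀ g : ℕ, 1 ≤ g →
      ∑ p ∈ Finset.HasAntidiagonal.antidiagonal g, Cg p.1 * Cg p.2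
        + 4 * (5 * (g : ℚ) - 6) * (5 * (g : ℚ) - 4) * Cg (g - 1) = 0) :
    ∀ g : ℕ, 1 ≤ g → ∀ Q : Polynomial ℚ,
      (1 - 108 * w) ^ (5 * g - 1) * W g = w * Polynomial.aeval w Q →
      Q.eval ((1 : ℚ) / 108) = 162 ^ g * Cg g := by
  have hX := X_eq_mul_one_sub hv0 hw
  obtain ⟨hF, hDv⟩ := poleFrame_of_cubic hv0 hv hX
  have leads := hasGenusLeads_of_toda (c := fun g => 162 ^ g * Cg g) hF (by rw [hV0]) hW0
    (hV0 ▸ hDv) hVg hWg (by simp [hC0]) (rescaled_recurrence hC0 hCrec)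
  intro g hg Q hQ
  rw [one_div, HasPoleExpansion.eval_eq_of_eq_mul_aeval (constantCoeff_eq_zero_of_X_eq hX hv0)
    (ne_zero_of_X_eq hX) hF.sq_eq ((leads g).W_pole hg) hQ]
  ring
end

section
/- For every integer g ≥ 2 there exists a polynomial S_g ∈ ℚ[y] of degree at most 2g − 1 such that D( S_g(w) · (1 − 108w)^{−(5g−3)} ) = Ṽ_g + Σ_{k=1}^{g} ( (−1)^k · (2^{1−2k} − 1) · B_{2k} / (2k)! ) · D^{2k}( Ṽ_{g−k} ). (Here (2^{1−2k} − 1)·B_{2k} is the value B_{2k}(1/2) of the (2k)-th Bernoulli polynomial at 1/2; the statement says that the genus-g part 𝒢_g of the auxiliary series equals S_g(w)/(1−108w)^{5g−3} up to an additive constant.) -/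
open PowerSeries

/-!
Put `y = 1 - 6v` and `t = (1 - 108w)⁻¹`. Then `y² = 1 - 72w`, `v' = 6t` and `w' = yt`, so
differentiation maps `p(w)tⁿ` to `y·q(w)tⁿ⁺²` and `y·p(w)tⁿ` to `r(w)tⁿ⁺²` with
`deg q ≤ deg p` and `deg r ≤ deg p + 1`. Isolating the genus-`g` terms of the Toda equations
gives a linear system for `(V_g, W_g)` of determinant `y² - 36w = 1 - 108w`, and induction on `g`
yields `V_g = y·P(w)t^(5g-1)` and `W_g = Q(w)t^(5g-1)` with `deg P ≤ 2g - 1`, `deg Q ≤ 2g`.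
The right-hand side is therefore `y·R(w)t^(5g-1)` with `deg R ≤ 2g - 1`, whatever the
coefficients. Finally `(S(w)tᵐ)' = y·L_m(S)(w)tᵐ⁺²` with `L_m S = (1 - 108X)S' + 108mS`, and
`L_m` multiplies the leading coefficient of `S` by `108(m - deg S)`, so it is invertible on
polynomials of degree `< m`.
-/

@[simp]
theorem Derivation.map_ofNat {R A M : Type*} [CommSemiring R] [CommSemiring A] [AddCommMonoid M]
    [Algebra R A] [Module A M] [Module R M] (D : Derivation R A M) (n : ℕ) [n.AtLeastTwo] :
    D (no_index (OfNat.ofNat n : A)) = 0 := by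
  rw [← Nat.cast_ofNat]
  exact D.map_natCast n

theorem Function.iterate_two_mul_succ_apply {α : Type*} (f : α → α) (k : ℕ) (x : α) :
    f^[2 * (k + 1)] x = f^[2 * k] (f (f x)) := by
  rw [mul_add, mul_one, Function.iterate_add_apply]
  rfl

theorem Finset.Nat.sum_antidiagonal_eq_add_sum_filter_fst_ne_zero {M : Type*} [AddCommMonoid M]
    (f : ℕ × ℕ → M) (n : ℕ) :
    ∑ p ∈ antidiagonal n, f p = f (0, n) + ∑ p ∈ antidiagonal n with p.1 ≠ 0, f p := by
  rw [← sum_filter_add_sum_filter_not (antidiagonal n) (fun p => p.1 = 0)]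
  congr 1
  refine sum_eq_single_of_mem (0, n) (by simp) fun p hp hne => absurd ?_ hne
  simp only [mem_filter, HasAntidiagonal.mem_antidiagonal] at hp
  ext <;> simp <;> omega

theorem Finset.Nat.sum_antidiagonal_eq_add_add_sum_filter {M : Type*} [AddCommMonoid M]
    (f : ℕ × ℕ → M) {n : ℕ} (hn : n ≠ 0) :
    ∑ p ∈ antidiagonal n, f p =
      f (0, n) + f (n, 0) + ∑ p ∈ antidiagonal n with p.1 ≠ 0 ∧ p.2 ≠ 0, f p := by
  rw [sum_antidiagonal_eq_add_sum_filter_fst_ne_zero, add_assoc,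
    ← sum_filter_add_sum_filter_not _ (fun p => p.2 = 0), filter_filter, filter_filter]
  congr 2
  refine sum_eq_single_of_mem (n, 0) (by simp [hn]) fun p hp hne => absurd ?_ hne
  simp only [mem_filter, HasAntidiagonal.mem_antidiagonal] at hp
  ext <;> simp <;> omega

namespace Toda

open Finset
open scoped Polynomial
open Polynomial (aeval degreeLE degreeLT)

noncomputable def numeratorDeriv (m : ℕ) : ℚ[X] →ₗ[ℚ] ℚ[X] :=
  LinearMap.mulLeft ℚ (1 - 108 * .X) ∘ₗ Polynomial.derivative
    + (108 * m : ℚ) • LinearMap.id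

theorem numeratorDeriv_apply (m : ℕ) (p : ℚ[X]) :
    numeratorDeriv m p = (1 - 108 * .X) * Polynomial.derivative p + (108 * m : ℚ) • p :=
  rfl

theorem coeff_numeratorDeriv (m : ℕ) (p : ℚ[X]) (k : ℕ) :
    (numeratorDeriv m p).coeff k = (k + 1) * p.coeff (k + 1) + 108 * (m - k) * p.coeff k := by
  rw [numeratorDeriv_apply, sub_mul, one_mul, mul_assoc]
  rcases k with _ | k
  · simp [Polynomial.coeff_derivative]
  · simp only [Polynomial.coeff_add, Polynomial.coeff_sub, Polynomial.coeff_derivative,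
      Nat.cast_add, Nat.cast_one, Polynomial.coeff_ofNat_mul, Polynomial.coeff_X_mul,
      Polynomial.coeff_smul, smul_eq_mul]
    ring

theorem natDegree_numeratorDeriv_le (m : ℕ) (p : ℚ[X]) :
    (numeratorDeriv m p).natDegree ≤ p.natDegree := by
  refine Polynomial.natDegree_le_iff_coeff_eq_zero.2 fun k hk => ?_
  rw [coeff_numeratorDeriv, Polynomial.coeff_eq_zero_of_natDegree_lt hk,
    Polynomial.coeff_eq_zero_of_natDegree_lt (hk.trans (Nat.lt_succ_self k))]
  ring

theorem eq_zero_of_numeratorDeriv_eq_zero {m : ℕ} {p : ℚ[X]} (hp : p.natDegree < m)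
    (h : numeratorDeriv m p = 0) : p = 0 := by
  by_contra hp0
  have := congrArg (Polynomial.coeff · p.natDegree) h
  simp only [coeff_numeratorDeriv, Polynomial.coeff_zero,
    Polynomial.coeff_eq_zero_of_natDegree_lt (Nat.lt_succ_self p.natDegree)] at this
  have hm : (m : ℚ) - p.natDegree ≠ 0 := sub_ne_zero.2 (by exact_mod_cast hp.ne')
  simp_all

theorem exists_numeratorDeriv_eq {m d : ℕ} (hd : d < m) {q : ℚ[X]} (hq : q.natDegree ≤ d) :
    ∃ p : ℚ[X], p.natDegree ≤ d ∧ numeratorDeriv m p = q := by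
  have mem_iff {p : ℚ[X]} : p ∈ degreeLT ℚ (d + 1) ↔ p.natDegree ≤ d := by
    rw [Polynomial.degreeLT_succ_eq_degreeLE, Polynomial.mem_degreeLE,
      Polynomial.natDegree_le_iff_degree_le]
  let L : degreeLT ℚ (d + 1) →ₗ[ℚ] degreeLT ℚ (d + 1) := (numeratorDeriv m).restrict
    fun p hp => mem_iff.2 ((natDegree_numeratorDeriv_le m p).trans (mem_iff.1 hp))
  have hL : Function.Injective L := by
    refine (injective_iff_map_eq_zero L).2 fun p hp => Subtype.ext ?_
    exact eq_zero_of_numeratorDeriv_eq_zero ((mem_iff.1 p.2).trans_lt hd)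
      (congrArg Subtype.val hp)
  obtain ⟨p, hp⟩ := LinearMap.injective_iff_surjective.1 hL ⟨q, mem_iff.2 hq⟩
  exact ⟨p, mem_iff.1 p.2, congrArg Subtype.val hp⟩

variable {A : Type*} [CommRing A] [Algebra ℚ A]

theorem algebraMap_mul_mem {S : Submodule ℚ A} (c : ℚ) {x : A} (hx : x ∈ S) :
    algebraMap ℚ A c * x ∈ S := by
  rw [← Algebra.smul_def]
  exact S.smul_mem c hx

theorem ofNat_mul_mem {S : Submodule ℚ A} (n : ℕ) [n.AtLeastTwo] {x : A} (hx : x ∈ S) :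
    (OfNat.ofNat n : A) * x ∈ S := by
  have := S.nsmul_mem hx n
  rwa [nsmul_eq_mul] at this

noncomputable def evenSpace (w t : A) (n d : ℕ) : Submodule ℚ A :=
  (degreeLE ℚ d).map ((LinearMap.mulRight ℚ (t ^ n)).comp (aeval w).toLinearMap)

noncomputable def oddSpace (w y t : A) (n d : ℕ) : Submodule ℚ A :=
  (evenSpace w t n d).map (LinearMap.mulLeft ℚ y)

section Spaces

variable {w y t : A} {n d : ℕ} {s : A}

theorem mem_evenSpace :
    s ∈ evenSpace w t n d ↔ ∃ p : ℚ[X], p.natDegree ≤ d ∧ aeval w p * t ^ n = s := by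
  simp [evenSpace, Polynomial.mem_degreeLE, Polynomial.natDegree_le_iff_degree_le]

theorem mem_oddSpace : s ∈ oddSpace w y t n d ↔ ∃ e ∈ evenSpace w t n d, y * e = s :=
  Submodule.mem_map

theorem mul_mem_oddSpace {e : A} (he : e ∈ evenSpace w t n d) : y * e ∈ oddSpace w y t n d :=
  mem_oddSpace.2 ⟨e, he, rfl⟩

theorem aeval_mul_pow_mem_evenSpace {p : ℚ[X]} (hp : p.natDegree ≤ d) :
    aeval w p * t ^ n ∈ evenSpace w t n d :=
  mem_evenSpace.2 ⟨p, hp, rfl⟩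

theorem one_mem_evenSpace : (1 : A) ∈ evenSpace w t 0 0 :=
  mem_evenSpace.2 ⟨1, by simp, by simp⟩

theorem t_mem_evenSpace : t ∈ evenSpace w t 1 0 :=
  mem_evenSpace.2 ⟨1, by simp, by simp⟩

theorem w_mem_evenSpace : w ∈ evenSpace w t 0 1 :=
  mem_evenSpace.2 ⟨.X, Polynomial.natDegree_X_le, by simp⟩

theorem y_mem_oddSpace : y ∈ oddSpace w y t 0 0 := by
  simpa using mul_mem_oddSpace (y := y) (one_mem_evenSpace (w := w) (t := t))

theorem mul_mem_evenSpace {n₁ n₂ d₁ d₂ : ℕ} {a b : A} (ha : a ∈ evenSpace w t n₁ d₁)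
    (hb : b ∈ evenSpace w t n₂ d₂) : a * b ∈ evenSpace w t (n₁ + n₂) (d₁ + d₂) := by
  obtain ⟨p, hp, rfl⟩ := mem_evenSpace.1 ha
  obtain ⟨q, hq, rfl⟩ := mem_evenSpace.1 hb
  refine mem_evenSpace.2 ⟨p * q, Polynomial.natDegree_mul_le.trans (by omega), ?_⟩
  rw [map_mul, pow_add]
  ring

theorem mul_mem_oddSpace_of_even_odd {n₁ n₂ d₁ d₂ : ℕ} {a b : A}
    (ha : a ∈ evenSpace w t n₁ d₁) (hb : b ∈ oddSpace w y t n₂ d₂) :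
    a * b ∈ oddSpace w y t (n₁ + n₂) (d₁ + d₂) := by
  obtain ⟨e, he, rfl⟩ := mem_oddSpace.1 hb
  rw [mul_left_comm]
  exact mul_mem_oddSpace (mul_mem_evenSpace ha he)

theorem mul_mem_evenSpace_of_odd_odd (hy : y ^ 2 = 1 - 72 * w) {n₁ n₂ d₁ d₂ : ℕ} {a b : A}
    (ha : a ∈ oddSpace w y t n₁ d₁) (hb : b ∈ oddSpace w y t n₂ d₂) :
    a * b ∈ evenSpace w t (n₁ + n₂) (d₁ + d₂ + 1) := by
  obtain ⟨e₁, he₁, rfl⟩ := mem_oddSpace.1 ha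
  obtain ⟨e₂, he₂, rfl⟩ := mem_oddSpace.1 hb
  have hy' : y * y ∈ evenSpace w t 0 1 :=
    mem_evenSpace.2 ⟨1 - 72 * .X, by compute_degree!, by simp [← sq, hy, map_ofNat]⟩
  have := mul_mem_evenSpace hy' (mul_mem_evenSpace he₁ he₂)
  rw [zero_add, add_comm 1] at this
  convert this using 1
  ring

theorem evenSpace_mono (ht : (1 - 108 * w) * t = 1) {n' d' : ℕ} (hn : n ≤ n')
    (hd : d + n' ≤ d' + n) : evenSpace w t n d ≤ evenSpace w t n' d' := by
  intro s hs
  obtain ⟨p, hp, rfl⟩ := mem_evenSpace.1 hs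
  obtain ⟨k, rfl⟩ := Nat.exists_eq_add_of_le hn
  refine mem_evenSpace.2 ⟨(1 - 108 * .X) ^ k * p, ?_, ?_⟩
  · refine Polynomial.natDegree_mul_le.trans ?_
    have : ((1 - 108 * .X : ℚ[X]) ^ k).natDegree ≤ k := by compute_degree!
    omega
  · simp only [map_mul, map_pow, map_sub, map_one, Polynomial.aeval_X, map_ofNat]
    calc _ = aeval w p * t ^ n * ((1 - 108 * w) * t) ^ k := by rw [mul_pow, pow_add]; ring
      _ = _ := by rw [ht, one_pow, mul_one]

theorem oddSpace_mono (ht : (1 - 108 * w) * t = 1) {n' d' : ℕ} (hn : n ≤ n')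
    (hd : d + n' ≤ d' + n) : oddSpace w y t n d ≤ oddSpace w y t n' d' :=
  Submodule.map_mono (evenSpace_mono ht hn hd)

end Spaces

structure GenusZeroRelations (δ : Derivation ℚ A A) (v w y t : A) : Prop where
  y_eq : y = 1 - 6 * v
  inv : (1 - 108 * w) * t = 1
  sq : y ^ 2 = 1 - 72 * w
  deriv_v : δ v = 6 * t
  deriv_w : δ w = y * t

namespace GenusZeroRelations

variable {δ : Derivation ℚ A A} {v w y t : A} (h : GenusZeroRelations δ v w y t)
include h

theorem deriv_y : δ y = -36 * t := by
  rw [h.y_eq, map_sub, Derivation.map_one_eq_zero, Derivation.leibniz, h.deriv_v,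
    Derivation.map_ofNat, smul_zero, add_zero, smul_eq_mul]
  ring

theorem deriv_t : δ t = 108 * y * t ^ 3 := by
  have := δ.leibniz_of_mul_eq_one ((mul_comm _ _).trans h.inv)
  simp only [map_sub, Derivation.map_one_eq_zero, Derivation.leibniz, h.deriv_w, smul_eq_mul,
    Derivation.map_ofNat, mul_zero, add_zero, zero_sub, mul_neg, neg_mul, neg_neg] at this
  linear_combination this

theorem deriv_aeval_mul_pow (p : ℚ[X]) (n : ℕ) :
    δ (aeval w p * t ^ n) = y * (aeval w (numeratorDeriv n p) * t ^ (n + 2)) := by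
  rw [Derivation.leibniz, Derivation.leibniz_pow, Derivation.comp_aeval_eq, h.deriv_t, h.deriv_w]
  simp only [numeratorDeriv_apply, map_add, map_mul, map_sub, map_one, map_ofNat,
    Polynomial.aeval_X, smul_eq_mul, nsmul_eq_mul, Algebra.smul_def (R := ℚ), map_natCast]
  rcases n with _ | n
  · linear_combination (-(y * aeval w (Polynomial.derivative p) * t)) * h.inv
  · push_cast
    linear_combination (-(y * aeval w (Polynomial.derivative p) * t ^ (n + 2))) * h.inv

variable {n d : ℕ} {s : A}

theorem deriv_mem_oddSpace (hs : s ∈ evenSpace w t n d) : δ s ∈ oddSpace w y t (n + 2) d := by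
  obtain ⟨p, hp, rfl⟩ := mem_evenSpace.1 hs
  rw [h.deriv_aeval_mul_pow]
  exact mul_mem_oddSpace
    (aeval_mul_pow_mem_evenSpace ((natDegree_numeratorDeriv_le n p).trans hp))

theorem deriv_mem_evenSpace (hs : s ∈ oddSpace w y t n d) :
    δ s ∈ evenSpace w t (n + 2) (d + 1) := by
  obtain ⟨e, he, rfl⟩ := mem_oddSpace.1 hs
  have h₁ : y * δ e ∈ evenSpace w t (n + 2) (d + 1) := by
    simpa using mul_mem_evenSpace_of_odd_odd h.sq y_mem_oddSpace (h.deriv_mem_oddSpace he)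
  have h₂ : δ y * e ∈ evenSpace w t (n + 2) (d + 1) := by
    have := mul_mem_evenSpace (t_mem_evenSpace (w := w)) he
    rw [h.deriv_y, show -36 * t * e = -(36 * (t * e)) by ring]
    exact neg_mem (ofNat_mul_mem 36 (evenSpace_mono h.inv (by omega) (by omega) this))
  rw [Derivation.leibniz, smul_eq_mul, smul_eq_mul]
  exact add_mem h₁ (mul_comm e (δ y) ▸ h₂)

theorem iterate_deriv_mem_evenSpace (hs : s ∈ evenSpace w t n d) (k : ℕ) :
    δ^[2 * k] s ∈ evenSpace w t (n + 4 * k) (d + k) := by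
  induction k generalizing n d s with
  | zero => simpa using hs
  | succ k ih =>
    rw [Function.iterate_two_mul_succ_apply]
    convert ih (h.deriv_mem_evenSpace (h.deriv_mem_oddSpace hs)) using 2 <;> omega

theorem iterate_deriv_mem_oddSpace (hs : s ∈ oddSpace w y t n d) (k : ℕ) :
    δ^[2 * k] s ∈ oddSpace w y t (n + 4 * k) (d + k) := by
  induction k generalizing n d s with
  | zero => simpa using hs
  | succ k ih =>
    rw [Function.iterate_two_mul_succ_apply]
    convert ih (h.deriv_mem_oddSpace (h.deriv_mem_evenSpace hs)) using 2 <;> omega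

theorem iterate_deriv_w_mem (k : ℕ) :
    δ^[2 * (k + 1)] w ∈ evenSpace w t (4 * k + 3) (k + 1) := by
  have hw : δ w ∈ oddSpace w y t 1 0 := by
    simpa [h.deriv_w] using mul_mem_oddSpace (y := y) t_mem_evenSpace
  rw [Function.iterate_two_mul_succ_apply]
  convert h.iterate_deriv_mem_evenSpace (h.deriv_mem_evenSpace hw) k using 2 <;> omega

theorem iterate_deriv_v_mem (k : ℕ) :
    δ^[2 * (k + 1)] v ∈ oddSpace w y t (4 * k + 3) k := by
  have hv : δ v ∈ evenSpace w t 1 0 := by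
    simpa [h.deriv_v] using ofNat_mul_mem 6 t_mem_evenSpace
  rw [Function.iterate_two_mul_succ_apply]
  convert h.iterate_deriv_mem_oddSpace (h.deriv_mem_oddSpace hv) k using 2 <;> omega

theorem exists_deriv_aeval_mul_pow_eq {m : ℕ} (hs : s ∈ oddSpace w y t (m + 2) d) (hd : d < m) :
    ∃ p : ℚ[X], p.natDegree ≤ d ∧ δ (aeval w p * t ^ m) = s := by
  obtain ⟨e, he, rfl⟩ := mem_oddSpace.1 hs
  obtain ⟨q, hq, rfl⟩ := mem_evenSpace.1 he
  obtain ⟨p, hp, hpq⟩ := exists_numeratorDeriv_eq hd hq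
  exact ⟨p, hp, by rw [h.deriv_aeval_mul_pow, hpq]⟩

end GenusZeroRelations

structure IsTodaSolution (δ : Derivation ℚ A A) (v w : A) (V W : ℕ → A) : Prop where
  V_zero : V 0 = v
  W_zero : W 0 = w
  V_eq : ∀ g, 1 ≤ g →
    V g = 3 * ∑ p ∈ antidiagonal g, V p.1 * V p.2
      + 6 * ∑ p ∈ antidiagonal g,
          algebraMap ℚ A (1 / ((4 : ℚ) ^ p.1 * (2 * p.1).factorial)) * δ^[2 * p.1] (W p.2)
  W_eq : ∀ g, 1 ≤ g →
    W g = 6 * ∑ p ∈ antidiagonal g, ∑ r ∈ antidiagonal p.2,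
      algebraMap ℚ A (1 / ((4 : ℚ) ^ p.1 * (2 * p.1).factorial)) *
        (W r.1 * δ^[2 * p.1] (V r.2))

def GenusForm (w y t : A) (V W : ℕ → A) (g : ℕ) : Prop :=
  V g ∈ oddSpace w y t (5 * g - 1) (2 * g - 1) ∧ W g ∈ evenSpace w t (5 * g - 1) (2 * g)

theorem mem_of_linear_system {w y t : A} (ht : (1 - 108 * w) * t = 1) (hy : y ^ 2 = 1 - 72 * w)
    {n d : ℕ} {a b V₀ W₀ : A} (ha : a ∈ evenSpace w t n d) (hb : b ∈ oddSpace w y t n d)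
    (hV : y * V₀ = 6 * W₀ + a) (hW : y * W₀ = 6 * w * V₀ + b) :
    V₀ ∈ oddSpace w y t (n + 1) d ∧ W₀ ∈ evenSpace w t (n + 1) (d + 1) := by
  have hV₀ : V₀ = t * (y * a + 6 * b) := by
    linear_combination (-V₀) * ht + t * y * hV + 6 * t * hW - t * V₀ * hy
  have hW₀ : W₀ = t * (6 * (w * a) + y * b) := by
    linear_combination (-W₀) * ht + 6 * t * w * hV + t * y * hW - t * W₀ * hy
  have hwa : 6 * (w * a) ∈ evenSpace w t n (d + 1) := evenSpace_mono ht (by omega) (by omega)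
    (ofNat_mul_mem 6 (mul_mem_evenSpace w_mem_evenSpace ha))
  have hyb : y * b ∈ evenSpace w t n (d + 1) := evenSpace_mono ht (by omega) (by omega)
    (mul_mem_evenSpace_of_odd_odd hy y_mem_oddSpace hb)
  constructor
  · rw [hV₀]
    exact oddSpace_mono ht (by omega) (by omega)
      (mul_mem_oddSpace_of_even_odd t_mem_evenSpace
        (add_mem (mul_mem_oddSpace ha) (ofNat_mul_mem 6 hb)))
  · rw [hW₀]
    exact evenSpace_mono ht (by omega) (by omega)
      (mul_mem_evenSpace t_mem_evenSpace (add_mem hwa hyb))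

namespace GenusZeroRelations

variable {δ : Derivation ℚ A A} {v w y t : A} {V W : ℕ → A}
  (h : GenusZeroRelations δ v w y t) (hT : IsTodaSolution δ v w V W)
include h hT

theorem W_mem_evenSpace {i : ℕ} (hi : 1 ≤ i → GenusForm w y t V W i) :
    W i ∈ evenSpace w t (5 * i) (2 * i + 1) := by
  rcases i.eq_zero_or_pos with rfl | hi₀
  · rw [hT.W_zero]
    exact w_mem_evenSpace
  · exact evenSpace_mono h.inv (by omega) (by omega) (hi hi₀).2

theorem iterate_deriv_V_mem {i : ℕ} (hi : 1 ≤ i → GenusForm w y t V W i) (k : ℕ) :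
    δ^[2 * (k + 1)] (V i) ∈ oddSpace w y t (5 * (i + k) + 3) (2 * (i + k)) := by
  rcases i.eq_zero_or_pos with rfl | hi₀
  · rw [hT.V_zero]
    exact oddSpace_mono h.inv (by omega) (by omega) (h.iterate_deriv_v_mem k)
  · exact oddSpace_mono h.inv (by omega) (by omega)
      (h.iterate_deriv_mem_oddSpace (hi hi₀).1 (k + 1))

theorem iterate_deriv_W_mem {i : ℕ} (hi : 1 ≤ i → GenusForm w y t V W i) (k : ℕ) :
    δ^[2 * (k + 1)] (W i) ∈ evenSpace w t (5 * (i + k) + 3) (2 * (i + k) + 1) := by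
  rcases i.eq_zero_or_pos with rfl | hi₀
  · rw [hT.W_zero]
    exact evenSpace_mono h.inv (by omega) (by omega) (h.iterate_deriv_w_mem k)
  · exact evenSpace_mono h.inv (by omega) (by omega)
      (h.iterate_deriv_mem_evenSpace (hi hi₀).2 (k + 1))

section Step

variable {g : ℕ} (hg : 1 ≤ g) (ih : ∀ i, 1 ≤ i → i < g → GenusForm w y t V W i)
include hg ih

theorem exists_mul_V_eq :
    ∃ a ∈ evenSpace w t (5 * g - 2) (2 * g - 1), y * V g = 6 * W g + a := by
  have hV := hT.V_eq g hg
  rw [Finset.Nat.sum_antidiagonal_eq_add_add_sum_filter _ (by omega : g ≠ 0),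
    Finset.Nat.sum_antidiagonal_eq_add_sum_filter_fst_ne_zero] at hV
  simp only [pow_zero, mul_zero, Nat.factorial_zero, Nat.cast_one, mul_one, div_one, map_one,
    one_mul, Function.iterate_zero, id_eq, hT.V_zero] at hV
  refine ⟨3 * ∑ p ∈ antidiagonal g with p.1 ≠ 0 ∧ p.2 ≠ 0, V p.1 * V p.2
    + 6 * ∑ p ∈ antidiagonal g with p.1 ≠ 0,
      algebraMap ℚ A (1 / ((4 : ℚ) ^ p.1 * (2 * p.1).factorial)) * δ^[2 * p.1] (W p.2),
    add_mem (ofNat_mul_mem 3 (sum_mem ?_)) (ofNat_mul_mem 6 (sum_mem ?_)), ?_⟩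
  · rintro ⟨i, j⟩ hij
    simp only [mem_filter, HasAntidiagonal.mem_antidiagonal] at hij
    exact evenSpace_mono h.inv (by omega) (by omega)
      (mul_mem_evenSpace_of_odd_odd h.sq (ih i (by omega) (by omega)).1
        (ih j (by omega) (by omega)).1)
  · rintro ⟨i, j⟩ hij
    simp only [mem_filter, HasAntidiagonal.mem_antidiagonal] at hij
    obtain ⟨k, rfl⟩ := Nat.exists_eq_add_one_of_ne_zero hij.2
    exact algebraMap_mul_mem _ (evenSpace_mono h.inv (by omega) (by omega)
      (h.iterate_deriv_W_mem hT (fun hj => ih j hj (by omega)) k))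
  · rw [h.y_eq]
    linear_combination hV

theorem exists_mul_W_eq :
    ∃ b ∈ oddSpace w y t (5 * g - 2) (2 * g - 1), y * W g = 6 * w * V g + b := by
  have hW := hT.W_eq g hg
  rw [Finset.Nat.sum_antidiagonal_eq_add_sum_filter_fst_ne_zero,
    Finset.Nat.sum_antidiagonal_eq_add_add_sum_filter _ (by omega : g ≠ 0)] at hW
  simp only [pow_zero, mul_zero, Nat.factorial_zero, Nat.cast_one, mul_one, div_one, map_one,
    one_mul, Function.iterate_zero, id_eq, hT.V_zero, hT.W_zero] at hW
  refine ⟨6 * (∑ r ∈ antidiagonal g with r.1 ≠ 0 ∧ r.2 ≠ 0, W r.1 * V r.2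
    + ∑ p ∈ antidiagonal g with p.1 ≠ 0, ∑ r ∈ antidiagonal p.2,
      algebraMap ℚ A (1 / ((4 : ℚ) ^ p.1 * (2 * p.1).factorial)) *
        (W r.1 * δ^[2 * p.1] (V r.2))),
    ofNat_mul_mem 6 (add_mem (sum_mem ?_) (sum_mem fun p hp => sum_mem ?_)), ?_⟩
  · rintro ⟨i, j⟩ hij
    simp only [mem_filter, HasAntidiagonal.mem_antidiagonal] at hij
    exact oddSpace_mono h.inv (by omega) (by omega)
      (mul_mem_oddSpace_of_even_odd (ih i (by omega) (by omega)).2 (ih j (by omega) (by omega)).1)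
  · obtain ⟨k, m⟩ := p
    simp only [mem_filter, HasAntidiagonal.mem_antidiagonal] at hp
    obtain ⟨k, rfl⟩ := Nat.exists_eq_add_one_of_ne_zero hp.2
    rintro ⟨i, j⟩ hij
    simp only [HasAntidiagonal.mem_antidiagonal] at hij
    exact algebraMap_mul_mem _ (oddSpace_mono h.inv (by omega) (by omega)
      (mul_mem_oddSpace_of_even_odd (h.W_mem_evenSpace hT fun hi => ih i hi (by omega))
        (h.iterate_deriv_V_mem hT (fun hj => ih j hj (by omega)) k)))
  · rw [h.y_eq]
    linear_combination hW

theorem genusForm_of_forall_lt : GenusForm w y t V W g := by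
  obtain ⟨a, ha, hVa⟩ := h.exists_mul_V_eq hT hg ih
  obtain ⟨b, hb, hWb⟩ := h.exists_mul_W_eq hT hg ih
  have := mem_of_linear_system h.inv h.sq ha hb hVa hWb
  rwa [show 5 * g - 2 + 1 = 5 * g - 1 by omega, show 2 * g - 1 + 1 = 2 * g by omega] at this

end Step

theorem genusForm {g : ℕ} (hg : 1 ≤ g) : GenusForm w y t V W g := by
  induction g using Nat.strong_induction_on with
  | _ g ih => exact h.genusForm_of_forall_lt hT hg fun i hi hig => ih i hig hi

theorem add_sum_iterate_deriv_mem_oddSpace (c : ℕ → ℚ) {g : ℕ} (hg : 1 ≤ g) :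
    V g + ∑ k ∈ Icc 1 g, algebraMap ℚ A (c k) * δ^[2 * k] (V (g - k)) ∈
      oddSpace w y t (5 * g - 1) (2 * g - 1) := by
  refine add_mem (h.genusForm hT hg).1 (sum_mem fun k hk => algebraMap_mul_mem _ ?_)
  obtain ⟨hk₁, hkg⟩ := mem_Icc.1 hk
  obtain ⟨k, rfl⟩ := Nat.exists_eq_add_one_of_ne_zero (by omega : k ≠ 0)
  exact oddSpace_mono h.inv (by omega) (by omega)
    (h.iterate_deriv_V_mem hT (fun hi => h.genusForm hT hi) k)

end GenusZeroRelations

theorem genusZeroRelations_derivative {v w : ℚ⟦X⟧} (hv0 : constantCoeff v = 0)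
    (hv : 6 * (X : ℚ⟦X⟧) = (1 - 9 * v + 18 * v ^ 2) * v) (hw : w = X * (1 - 6 * v)⁻¹) :
    GenusZeroRelations (derivative ℚ) v w (1 - 6 * v) (1 - 108 * w)⁻¹ := by
  set t := (1 - 108 * w)⁻¹
  have hy : constantCoeff (1 - 6 * v) ≠ 0 := by simp [hv0]
  have hy0 : 1 - 6 * v ≠ 0 := fun h0 => hy (by rw [h0, map_zero])
  have hwy : w * (1 - 6 * v) = X := by
    rw [hw, mul_assoc, PowerSeries.inv_mul_cancel _ hy, mul_one]
  have ht : (1 - 108 * w) * t = 1 := PowerSeries.mul_inv_cancel _ (by simp [hw])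
  -- `hδv`, `hsq` and `w' = yt` are checked after multiplying by the non-zero-divisor `1 - 6v`,
  -- which turns them into polynomial identities in `v` modulo the cubic and `w(1 - 6v) = X`.
  have hδv : (1 - 108 * w) * derivative ℚ v = 6 := by
    have := congrArg (derivative ℚ) hv
    simp only [Derivation.leibniz, Derivation.leibniz_pow, derivative_X, Derivation.map_ofNat,
      Derivation.map_one_eq_zero, map_add, map_sub, smul_eq_mul, nsmul_eq_mul, mul_one, mul_zero,
      add_zero, zero_sub, Nat.add_one_sub_one, pow_one, Nat.cast_ofNat] at this
    refine mul_left_cancel₀ hy0 ?_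
    linear_combination
      (-108 * derivative ℚ v) * hwy - 18 * derivative ℚ v * hv - (1 - 6 * v) * this
  have hδv' : derivative ℚ v = 6 * t := by linear_combination t * hδv - derivative ℚ v * ht
  have hsq : (1 - 6 * v) ^ 2 = 1 - 72 * w := by
    refine mul_left_cancel₀ hy0 ?_
    linear_combination 12 * hv + 72 * hwy
  refine ⟨rfl, ht, hsq, hδv', ?_⟩
  have := congrArg (derivative ℚ) hwy
  simp only [Derivation.leibniz, map_sub, Derivation.map_one_eq_zero, hδv', smul_eq_mul,
    Derivation.map_ofNat, mul_zero, add_zero, zero_sub, mul_neg, derivative_X] at this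
  refine mul_left_cancel₀ hy0 ?_
  linear_combination this - ht - t * hsq

end Toda

theorem stmt4 (v w : PowerSeries ℚ) (hv0 : constantCoeff v = 0)
    (hv : 6 * (X : ℚ⟦X⟧) = (1 - 9 * v + 18 * v ^ 2) * v)
    (hw : w = X * (1 - 6 * v)⁻¹)
    (V W : ℕ → PowerSeries ℚ) (hV0 : V 0 = v) (hW0 : W 0 = w)
    (hVg : ∀ g, 1 ≤ g →
      V g = 3 * ∑ p ∈ Finset.HasAntidiagonal.antidiagonal g, V p.1 * V p.2
        + 6 * ∑ p ∈ Finset.HasAntidiagonal.antidiagonal g,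
            C (1 / ((4 : ℚ) ^ p.1 * (2 * p.1).factorial)) * D^[2 * p.1] (W p.2))
    (hWg : ∀ g, 1 ≤ g →
      W g = 6 * ∑ p ∈ Finset.HasAntidiagonal.antidiagonal g, ∑ r ∈ Finset.HasAntidiagonal.antidiagonal p.2,
            C (1 / ((4 : ℚ) ^ p.1 * (2 * p.1).factorial)) * (W r.1 * D^[2 * p.1] (V r.2)))
    (g : ℕ) (hg : 2 ≤ g) :
    ∃ S : Polynomial ℚ, S.natDegree ≤ 2 * g - 1 ∧
      D (Polynomial.aeval w S * ((1 - 108 * w) ^ (5 * g - 3))⁻¹) =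
        V g + ∑ k ∈ Finset.Icc 1 g,
          C ((-1) ^ k * (2 / (4 : ℚ) ^ k - 1) * bernoulli (2 * k) / (2 * k).factorial) *
            D^[2 * k] (V (g - k)) := by
  have hR := Toda.genusZeroRelations_derivative hv0 hv hw
  have hT : Toda.IsTodaSolution (derivative ℚ) v w V W := ⟨hV0, hW0, hVg, hWg⟩
  have hG := hR.add_sum_iterate_deriv_mem_oddSpace hT
    (fun k => (-1) ^ k * (2 / (4 : ℚ) ^ k - 1) * bernoulli (2 * k) / (2 * k).factorial)
    (by omega : 1 ≤ g)
  rw [show 5 * g - 1 = 5 * g - 3 + 2 by omega] at hG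
  obtain ⟨S, hS, hSG⟩ := hR.exists_deriv_aeval_mul_pow_eq hG (by omega)
  have hinv : ((1 - 108 * w) ^ (5 * g - 3))⁻¹ = (1 - 108 * w)⁻¹ ^ (5 * g - 3) := by
    have hu : constantCoeff (1 - 108 * w) ≠ 0 := by simp [hw]
    rw [PowerSeries.inv_eq_iff_mul_eq_one (by simpa using pow_ne_zero _ hu), ← mul_pow,
      PowerSeries.inv_mul_cancel _ hu, one_pow]
  exact ⟨S, hS, hinv ▸ hSG⟩
end

section
/- For every integer k ≥ 1 there exist rational numbers T̃_{k,1}, …, T̃_{k,k} such that for every formal power series f ∈ ℚ⟦y⟧ one has in ℚ⟦x⟧: (1 − 24w)^{2k} · D^{k}( f(w) ) = Σ_{i=1}^{k} T̃_{k,i} · (1 − 24w)^{i} · f^{(i)}(w), where f(w) and f^{(i)}(w) denote substitution of w into f and into its i-th formal derivative, and D^k is the k-th formal derivative with respect to x. -/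
open PowerSeries

/-- Substitution of a power series `w` with zero constant term into a power series `f`:
the `n`-th coefficient of `f(w)` only depends on the truncation of `f` at order `n + 1`. -/
noncomputable def psSubst (w f : PowerSeries ℚ) : PowerSeries ℚ :=
  PowerSeries.mk fun n => PowerSeries.coeff n (Polynomial.aeval w (PowerSeries.trunc (n + 1) f))

/-!
Put `u = 1 - 24 w`. Differentiating `x = w - 12 w²` gives `u w' = 1`, hence `u u' = -24`, and by the
chain rule `(f⁽ⁱ⁾(w))' = f⁽ⁱ⁺¹⁾(w) w'`. So the operator `h ↦ u² h'` sends `uⁱ f⁽ⁱ⁾(w)` to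
`uⁱ⁺¹ f⁽ⁱ⁺¹⁾(w) - 24 i uⁱ f⁽ⁱ⁾(w)`, while `u^(2k+2) Dᵏ⁺¹ h = u² (u^(2k) Dᵏ h)' + 48 k u^(2k) Dᵏ h`.
Hence, by induction on `k`, `u^(2k) Dᵏ (f(w))` stays in the ℚ-span of the `uⁱ f⁽ⁱ⁾(w)`, `1 ≤ i ≤ k`.
Working with these as functions of `f` makes the coefficients independent of `f`.
-/

section Derivation

variable {R A : Type*} [CommRing R] [CommRing A] [Algebra R A] (δ : Derivation R A A)

theorem Derivation.map_ofNat_mul_s8 (n : ℕ) [n.AtLeastTwo] (a : A) :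
    δ (OfNat.ofNat n * a) = OfNat.ofNat n * δ a := by
  rw [← Nat.cast_ofNat, δ.leibniz, δ.map_natCast, smul_zero, add_zero, smul_eq_mul]

theorem Derivation.map_sub_twelve_mul_sq (w : A) :
    δ (w - 12 * w ^ 2) = (1 - 24 * w) * δ w := by
  rw [δ.map_sub, δ.map_ofNat_mul_s8, δ.leibniz_pow]
  simp only [nsmul_eq_mul, smul_eq_mul]
  ring

theorem Derivation.map_one_sub_twentyFour_mul (w : A) :
    δ (1 - 24 * w) = -24 * δ w := by
  rw [δ.map_sub, δ.map_one_eq_zero, δ.map_ofNat_mul_s8]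
  ring

variable {δ} {u : A} {c : R}

theorem sq_mul_derivation_pow_mul (hu : u * δ u = algebraMap R A c) (n : ℕ) (y : A) :
    u ^ 2 * δ (u ^ n * y) = u ^ (n + 2) * δ y + (n * c) • (u ^ n * y) := by
  rw [δ.leibniz, δ.leibniz_pow, Algebra.smul_def (_ * c), map_mul, map_natCast, ← hu]
  rcases n with _ | n
  · simp
  · simp only [nsmul_eq_mul, smul_eq_mul, Nat.add_sub_cancel]
    ring

variable {ι : Type*}

variable (R) in
/-- Taken in `ι → A` rather than `A`, so that the coefficients of a member are uniform in `j`. -/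
def powMulSpan (u : A) (g : ι → ℕ → A) (k : ℕ) : Submodule R (ι → A) :=
  Submodule.span R ((fun i j => u ^ i * g j i) '' ↑(Finset.Icc 1 k))

variable {w : A} {g : ι → ℕ → A}

theorem sq_mul_derivation_mem_powMulSpan (hw : u * δ w = 1) (hu : u * δ u = algebraMap R A c)
    (hg : ∀ j i, δ (g j i) = g j (i + 1) * δ w) {k : ℕ} {x : ι → A}
    (hx : x ∈ powMulSpan R u g k) : (fun j => u ^ 2 * δ (x j)) ∈ powMulSpan R u g (k + 1) := by
  let L : (ι → A) →ₗ[R] ι → A :=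
    LinearMap.pi fun j => LinearMap.mulLeft R (u ^ 2) ∘ₗ δ.toLinearMap ∘ₗ LinearMap.proj j
  suffices (powMulSpan R u g k).map L ≤ powMulSpan R u g (k + 1) from this ⟨x, hx, rfl⟩
  rw [powMulSpan, Submodule.map_span_le]
  rintro _ ⟨i, hi, rfl⟩
  rw [Finset.coe_Icc, Set.mem_Icc] at hi
  have hL : L (fun j => u ^ i * g j i) =
      (fun j => u ^ (i + 1) * g j (i + 1)) + (i * c) • fun j => u ^ i * g j i := by
    funext j
    change u ^ 2 * δ (u ^ i * g j i) = _
    rw [sq_mul_derivation_pow_mul hu, hg, Pi.add_apply, Pi.smul_apply]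
    linear_combination u ^ (i + 1) * g j (i + 1) * hw
  have mem : ∀ l ∈ Set.Icc 1 (k + 1), (fun j => u ^ l * g j l) ∈ powMulSpan R u g (k + 1) :=
    fun l hl => Submodule.subset_span ⟨l, by simpa using hl, rfl⟩
  rw [hL]
  exact add_mem (mem _ ⟨by omega, by omega⟩) (Submodule.smul_mem _ _ (mem _ ⟨hi.1, by omega⟩))

theorem pow_mul_iterate_derivation_mem_powMulSpan (hw : u * δ w = 1)
    (hu : u * δ u = algebraMap R A c) (hg : ∀ j i, δ (g j i) = g j (i + 1) * δ w) {k : ℕ}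
    (hk : 1 ≤ k) : (fun j => u ^ (2 * k) * δ^[k] (g j 0)) ∈ powMulSpan R u g k := by
  induction k, hk using Nat.le_induction with
  | base =>
    have : (fun j => u ^ (2 * 1) * δ^[1] (g j 0)) = fun j => u ^ 1 * g j 1 := by
      funext j
      rw [Function.iterate_one, hg]
      linear_combination u * g j 1 * hw
    rw [this]
    exact Submodule.subset_span ⟨1, by simp, rfl⟩
  | succ k _ ih =>
    set x := fun j => u ^ (2 * k) * δ^[k] (g j 0)
    have : (fun j => u ^ (2 * (k + 1)) * δ^[k + 1] (g j 0)) =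
        (fun j => u ^ 2 * δ (x j)) - (2 * k * c) • x := by
      funext j
      rw [Pi.sub_apply, Pi.smul_apply, sq_mul_derivation_pow_mul hu, Function.iterate_succ_apply']
      push_cast
      ring
    rw [this]
    refine sub_mem (sq_mul_derivation_mem_powMulSpan hw hu hg ih) (Submodule.smul_mem _ _ ?_)
    exact Submodule.span_mono
      (Set.image_mono (by simpa using Set.Icc_subset_Icc_right (by omega))) ih

end Derivation

namespace PowerSeries

theorem coeff_pow_eq_zero_of_constantCoeff_eq_zero {R : Type*} [CommSemiring R] {w : R⟦X⟧}
    (hw : constantCoeff w = 0) {n d : ℕ} (h : n < d) : coeff n (w ^ d) = 0 :=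
  X_pow_dvd_iff.1 (pow_dvd_pow_of_dvd (X_dvd_iff.2 hw) d) n h

end PowerSeries

theorem D_eq_derivative : D = ⇑(derivative ℚ) := rfl

theorem psSubst_eq_subst {w : ℚ⟦X⟧} (hw : constantCoeff w = 0) (f : ℚ⟦X⟧) :
    psSubst w f = f.subst w := by
  have hs := HasSubst.of_constantCoeff_zero' hw
  ext n
  rw [psSubst, coeff_mk, ← subst_coe hs, coeff_subst' hs, coeff_subst' hs]
  refine finsum_congr fun d => ?_
  rcases lt_or_ge d (n + 1) with hd | hd
  · rw [coeff_coe_trunc_of_lt hd]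
  · rw [coeff_pow_eq_zero_of_constantCoeff_eq_zero hw (by omega), smul_zero, smul_zero]

theorem derivative_psSubst {w : ℚ⟦X⟧} (hw : constantCoeff w = 0) (f : ℚ⟦X⟧) :
    derivative ℚ (psSubst w f) = psSubst w (derivative ℚ f) * derivative ℚ w := by
  rw [psSubst_eq_subst hw, psSubst_eq_subst hw]
  exact derivative_subst (HasSubst.of_constantCoeff_zero' hw)

theorem stmt8 (w : PowerSeries ℚ) (hw0 : constantCoeff w = 0)
    (hw : (X : ℚ⟦X⟧) = w - 12 * w ^ 2) (k : ℕ) (hk : 1 ≤ k) :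
    ∃ T : ℕ → ℚ,
      ∀ f : PowerSeries ℚ,
        (1 - 24 * w) ^ (2 * k) * D^[k] (psSubst w f) =
          ∑ i ∈ Finset.Icc 1 k,
            C (T i) * (1 - 24 * w) ^ i * psSubst w (D^[i] f) := by
  set u := 1 - 24 * w
  have hDw : u * derivative ℚ w = 1 := by
    rw [← (derivative ℚ).map_sub_twelve_mul_sq, ← hw, derivative_X]
  have hDu : u * derivative ℚ u = algebraMap ℚ ℚ⟦X⟧ (-24) := by
    rw [(derivative ℚ).map_one_sub_twentyFour_mul, map_neg, map_ofNat]
    linear_combination (-24 : ℚ⟦X⟧) * hDw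
  have hg (f : ℚ⟦X⟧) (i : ℕ) : derivative ℚ (psSubst w ((derivative ℚ)^[i] f)) =
      psSubst w ((derivative ℚ)^[i + 1] f) * derivative ℚ w := by
    rw [derivative_psSubst hw0, Function.iterate_succ_apply']
  obtain ⟨T, hT⟩ := (Submodule.mem_span_image_finset_iff_exists_fun' ℚ).1
    (pow_mul_iterate_derivation_mem_powMulSpan hDw hDu hg hk)
  refine ⟨T, fun f => ?_⟩
  simpa only [D_eq_derivative, mul_assoc, Function.iterate_zero, id_eq, Finset.sum_apply,
    Pi.smul_apply, smul_eq_C_mul] using (congrFun hT f).symm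
end
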